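/- arXiv:1807.03386 — 2 statements merged into one kernel-verified Lean document; each statement's English description precedes it below -/
import Mathlib

section
/- Let A = a 1_q^T + E with a ∈ ℝ^p, E ∈ ℝ^{p×q}, E^T E = pε² I_q and E^T a = 0, with ‖a‖², ε > 0. Then the singular value ratio σ₁(A)/σ₂(A) = √(1 + q‖a‖²/(pε²)), which is strictly increasing in q for fixed ‖a‖, p, ε. -/
open Matrix

/-- In the idealized noisy-periodic model `A = a 1_qᵀ + E` with
`Eᵀ E = p ε² I_q`, `Eᵀ a = 0`, the singular value ratio of the two largest
singular values satisfies `σ₁/σ₂ = √(1 + q ‖a‖² / (p ε²))`, and this quantity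
is strictly increasing in `q` for fixed `‖a‖, p, ε`. -/
theorem stmt_18 (p q : ℕ) (hp : 0 < p) (hq : 2 ≤ q) (a : Fin p → ℝ)
    (ha : a ≠ 0) (ε : ℝ) (hε : 0 < ε) (E : Matrix (Fin p) (Fin q) ℝ)
    (hE : Eᵀ * E = ((p : ℝ) * ε ^ 2) • (1 : Matrix (Fin q) (Fin q) ℝ))
    (hEa : Eᵀ.mulVec a = 0)
    (A : Matrix (Fin p) (Fin q) ℝ)
    (hA : A = vecMulVec a (fun _ => 1) + E)
    (σ₁ σ₂ : ℝ)
    (hσ₁ : IsGreatest (Real.sqrt '' spectrum ℝ (Aᵀ * A)) σ₁)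
    (hσ₂ : IsGreatest ((Real.sqrt '' spectrum ℝ (Aᵀ * A)) \ {σ₁}) σ₂) :
    σ₁ / σ₂
      = Real.sqrt (1 + (q : ℝ) * (∑ i, a i ^ 2) / ((p : ℝ) * ε ^ 2)) ∧
    StrictMono (fun n : ℕ =>
      Real.sqrt (1 + (n : ℝ) * (∑ i, a i ^ 2) / ((p : ℝ) * ε ^ 2))) := by
  classical
  set s : ℝ := ∑ i, a i ^ 2 with hs_def
  have hs : 0 < s := by
    obtain ⟨i, hi⟩ := Function.ne_iff.mp ha
    exact Finset.sum_pos' (fun j _ => sq_nonneg _)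
      ⟨i, Finset.mem_univ i, lt_of_le_of_ne (sq_nonneg _) (Ne.symm (pow_ne_zero 2 hi))⟩
  set c : ℝ := (p : ℝ) * ε ^ 2 with hc_def
  have hc : 0 < c := by positivity
  have hqpos : (0 : ℝ) < (q : ℝ) := by
    exact_mod_cast Nat.lt_of_lt_of_le (by norm_num) hq
  -- entries of AᵀA
  have hM : ∀ i j, (Aᵀ * A) i j = s + (if i = j then c else 0) := by
    intro i j
    have h1 : ∀ i : Fin q, ∑ k, E k i * a k = 0 := by
      intro i
      have := congrFun hEa i
      simpa [Matrix.mulVec, Matrix.transpose_apply, dotProduct] using this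
    have h2 : (∑ k, E k i * E k j) = if i = j then c else 0 := by
      have := congrFun (congrFun hE i) j
      simpa [Matrix.mul_apply, Matrix.transpose_apply, Matrix.one_apply,
        Matrix.smul_apply, mul_ite, mul_one, mul_zero] using this
    have expand : (Aᵀ * A) i j
        = (∑ k, a k * a k) + ((∑ k, a k * E k j) + ((∑ k, E k i * a k)
          + (∑ k, E k i * E k j))) := by
      rw [← Finset.sum_add_distrib, ← Finset.sum_add_distrib,
        ← Finset.sum_add_distrib]
      simp only [Matrix.mul_apply, Matrix.transpose_apply]
      refine Finset.sum_congr rfl fun k _ => ?_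
      simp only [hA, Matrix.add_apply, Matrix.vecMulVec_apply]
      ring
    have h3 : (∑ k, a k * E k j) = 0 := by
      rw [Finset.sum_congr rfl fun k _ => mul_comm (a k) (E k j)]
      exact h1 j
    have h4 : (∑ k, a k * a k) = s := by
      rw [hs_def]
      exact Finset.sum_congr rfl fun k _ => (sq (a k)).symm ▸ (pow_two (a k)).symm
    rw [expand, h2, h3, h1 i, h4]
    ring
  -- mulVec formula
  have hmul : ∀ (v : Fin q → ℝ) (i : Fin q),
      (Aᵀ * A).mulVec v i = s * (∑ j, v j) + c * v i := by
    intro v i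
    simp only [Matrix.mulVec, dotProduct, hM, add_mul, ite_mul, zero_mul,
      Finset.sum_add_distrib, ← Finset.mul_sum]
    rw [Finset.sum_ite_eq]
    simp
  -- spectrum characterization via eigenvectors
  have key : ∀ μ : ℝ, μ ∈ spectrum ℝ (Aᵀ * A) ↔
      ∃ v : Fin q → ℝ, v ≠ 0 ∧ (Aᵀ * A).mulVec v = μ • v := by
    intro μ
    rw [spectrum.mem_iff, Matrix.isUnit_iff_isUnit_det, isUnit_iff_ne_zero,
      not_not, ← Matrix.exists_mulVec_eq_zero_iff]
    have halg : (algebraMap ℝ (Matrix (Fin q) (Fin q) ℝ)) μ = μ • 1 := by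
      simp [Algebra.algebraMap_eq_smul_one]
    constructor
    · rintro ⟨v, hv, hveq⟩
      refine ⟨v, hv, ?_⟩
      rw [halg, Matrix.sub_mulVec, Matrix.smul_mulVec,
        Matrix.one_mulVec] at hveq
      exact (sub_eq_zero.mp hveq).symm
    · rintro ⟨v, hv, hveq⟩
      refine ⟨v, hv, ?_⟩
      rw [halg, Matrix.sub_mulVec, Matrix.smul_mulVec,
        Matrix.one_mulVec, hveq, sub_self]
  -- compute the spectrum
  have hspec : spectrum ℝ (Aᵀ * A) = {c + s * q, c} := by
    ext μ
    rw [key]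
    simp only [Set.mem_insert_iff, Set.mem_singleton_iff]
    constructor
    · rintro ⟨v, hv, hveq⟩
      by_cases hsum : (∑ j, v j) = 0
      · obtain ⟨i, hi⟩ := Function.ne_iff.mp hv
        have h := congrFun hveq i
        rw [hmul] at h
        simp only [hsum, mul_zero, zero_add, Pi.smul_apply, smul_eq_mul] at h
        right
        exact (mul_right_cancel₀ hi h).symm
      · have h : ∑ i, (Aᵀ * A).mulVec v i = ∑ i, (μ • v) i := by rw [hveq]
        simp only [hmul, Pi.smul_apply, smul_eq_mul, Finset.sum_add_distrib,
          Finset.sum_const, ← Finset.mul_sum, Finset.card_univ,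
          Fintype.card_fin, nsmul_eq_mul] at h
        left
        have h2 : (c + s * q) * (∑ j, v j) = μ * (∑ j, v j) := by
          linear_combination h
        exact (mul_right_cancel₀ hsum h2).symm
    · have i0 : Fin q := ⟨0, by omega⟩
      have i1 : Fin q := ⟨1, by omega⟩
      rintro (rfl | rfl)
      · refine ⟨fun _ => 1, ?_, ?_⟩
        · intro h
          have := congrFun h ⟨0, by omega⟩
          norm_num at this
        · funext i
          rw [hmul]
          simp only [Finset.sum_const, Finset.card_univ, Fintype.card_fin,
            nsmul_eq_mul, mul_one, Pi.smul_apply, smul_eq_mul]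
          ring
      · set v : Fin q → ℝ :=
          Pi.single (⟨0, by omega⟩ : Fin q) 1 - Pi.single (⟨1, by omega⟩ : Fin q) 1
          with hv_def
        have hne : (⟨0, by omega⟩ : Fin q) ≠ (⟨1, by omega⟩ : Fin q) := by
          simp [Fin.ext_iff]
        have hv0 : v ⟨0, by omega⟩ = 1 := by
          simp [hv_def, Pi.single_eq_same, Pi.single_eq_of_ne hne]
        have hsum : (∑ j, v j) = 0 := by
          simp [hv_def, Finset.sum_sub_distrib, Finset.sum_pi_single']
        refine ⟨v, ?_, ?_⟩
        · intro h
          rw [h] at hv0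
          norm_num at hv0
        · funext i
          rw [hmul, hsum]
          simp
    -- membership
  -- image under sqrt
  have himg : Real.sqrt '' spectrum ℝ (Aᵀ * A)
      = {Real.sqrt (c + s * q), Real.sqrt c} := by
    rw [hspec, Set.image_pair]
  have hlt : Real.sqrt c < Real.sqrt (c + s * q) := by
    apply Real.sqrt_lt_sqrt hc.le
    nlinarith
  have hσ1 : σ₁ = Real.sqrt (c + s * q) := by
    refine hσ₁.unique ⟨?_, ?_⟩
    · rw [himg]; exact Set.mem_insert _ _
    · intro x hx
      rw [himg] at hx
      rcases hx with rfl | hx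
      · exact le_refl _
      · rw [Set.mem_singleton_iff] at hx
        subst hx
        exact hlt.le
  have hdiff : (Real.sqrt '' spectrum ℝ (Aᵀ * A)) \ {σ₁} = {Real.sqrt c} := by
    rw [himg, hσ1]
    ext x
    simp only [Set.mem_diff, Set.mem_insert_iff, Set.mem_singleton_iff]
    constructor
    · rintro ⟨rfl | rfl, hne⟩
      · exact absurd rfl hne
      · rfl
    · rintro rfl
      exact ⟨Or.inr rfl, hlt.ne⟩
  have hσ2 : σ₂ = Real.sqrt c := by
    rw [hdiff] at hσ₂
    exact hσ₂.unique isGreatest_singleton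
  have hcs : Real.sqrt c ≠ 0 := ne_of_gt (Real.sqrt_pos.mpr hc)
  constructor
  · rw [hσ1, hσ2, ← Real.sqrt_div (by positivity)]
    congr 1
    field_simp
  · intro m n hmn
    apply Real.sqrt_lt_sqrt (by positivity)
    have hcast : (m : ℝ) < (n : ℝ) := by exact_mod_cast hmn
    gcongr
end

section
/- For any A ∈ ℝ^{p×q} and any rank-k matrix B ∈ ℝ^{p×q}, ‖A − B‖_F² ≥ Σ_{i=k+1}^{min(p,q)} σᵢ(A)², i.e. the truncated SVD A_k is an optimal rank-k approximation in Frobenius norm. -/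
open Matrix

section EckartYoungAux

open Finset

private lemma ey_dp_sum_right {n m : ℕ} (x : Fin n → ℝ) (f : Fin m → Fin n → ℝ) :
    x ⬝ᵥ (∑ i, f i) = ∑ i, x ⬝ᵥ f i := by
  simp [dotProduct, Finset.mul_sum]; exact Finset.sum_comm

private lemma ey_dp_sum_left {n m : ℕ} (x : Fin n → ℝ) (f : Fin m → Fin n → ℝ) :
    (∑ i, f i) ⬝ᵥ x = ∑ i, f i ⬝ᵥ x := by
  simp [dotProduct, Finset.sum_mul]; exact Finset.sum_comm

private lemma ey_dp_self_nonneg {n : ℕ} (x : Fin n → ℝ) : 0 ≤ x ⬝ᵥ x := by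
  apply Finset.sum_nonneg; intro i _; exact mul_self_nonneg _

private lemma ey_bessel {n m : ℕ} (v : Fin m → Fin n → ℝ)
    (hv : ∀ i j, v i ⬝ᵥ v j = if i = j then 1 else 0) (x : Fin n → ℝ) :
    ∑ i, (x ⬝ᵥ v i) ^ 2 ≤ x ⬝ᵥ x := by
  have h0 := ey_dp_self_nonneg (x - ∑ i, (x ⬝ᵥ v i) • v i)
  have hexp : (x - ∑ i, (x ⬝ᵥ v i) • v i) ⬝ᵥ (x - ∑ i, (x ⬝ᵥ v i) • v i)
      = x ⬝ᵥ x - ∑ i, (x ⬝ᵥ v i) ^ 2 := by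
    simp only [sub_dotProduct, dotProduct_sub, ey_dp_sum_right, ey_dp_sum_left,
      smul_dotProduct, dotProduct_smul, smul_eq_mul, hv]
    simp only [mul_ite, mul_one, mul_zero, Finset.sum_ite_eq', Finset.mem_univ, if_true]
    have : ∀ i, x ⬝ᵥ v i * (v i ⬝ᵥ x) = (x ⬝ᵥ v i)^2 := by
      intro i; rw [dotProduct_comm]; ring
    simp only [this]
    ring
  linarith [hexp ▸ h0]

private lemma ey_key_expand {n r : ℕ} (e : Fin r → Fin n → ℝ)
    (he : ∀ i j, e i ⬝ᵥ e j = if i = j then 1 else 0)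
    (s : ℝ) (u : Fin n → ℝ) (hu : u ⬝ᵥ u = 1) (c : Fin r → ℝ) :
    s ^ 2 * (1 - ∑ j, (u ⬝ᵥ e j) ^ 2)
      ≤ (s • u - ∑ j, c j • e j) ⬝ᵥ (s • u - ∑ j, c j • e j) := by
  have hexp : (s • u - ∑ j, c j • e j) ⬝ᵥ (s • u - ∑ j, c j • e j)
      = s ^ 2 * (1 - ∑ j, (u ⬝ᵥ e j) ^ 2) + ∑ j, (c j - s * (u ⬝ᵥ e j)) ^ 2 := by
    have expand : ∑ j, (c j - s * (u ⬝ᵥ e j)) ^ 2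
        = (∑ j, c j * c j) - 2 * s * (∑ j, c j * (u ⬝ᵥ e j))
          + s ^ 2 * (∑ j, (u ⬝ᵥ e j) ^ 2) := by
      rw [Finset.mul_sum, Finset.mul_sum, ← Finset.sum_sub_distrib,
        ← Finset.sum_add_distrib]
      exact Finset.sum_congr rfl fun j _ => by ring
    simp only [sub_dotProduct, dotProduct_sub, ey_dp_sum_right, ey_dp_sum_left,
      smul_dotProduct, dotProduct_smul, smul_eq_mul, he, hu]
    simp only [mul_ite, mul_one, mul_zero, Finset.sum_ite_eq', Finset.mem_univ, if_true]
    have h1 : ∀ j, e j ⬝ᵥ u = u ⬝ᵥ e j := fun j => dotProduct_comm _ _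
    simp only [h1]
    rw [expand]
    ring
  nlinarith [Finset.sum_nonneg (fun j (_ : j ∈ Finset.univ) => sq_nonneg (c j - s * (u ⬝ᵥ e j)))]

set_option maxHeartbeats 1000000 in
private lemma ey_exists_onb {p q k : ℕ} (B : Matrix (Fin p) (Fin q) ℝ) (hk : B.rank ≤ k) :
    ∃ r : ℕ, r ≤ k ∧ ∃ e : Fin r → Fin p → ℝ,
      (∀ i j, e i ⬝ᵥ e j = if i = j then 1 else 0) ∧
      ∀ x : Fin q → ℝ, ∃ c : Fin r → ℝ, B.mulVec x = ∑ j, c j • e j := by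
  classical
  let φ : (Fin p → ℝ) ≃ₗ[ℝ] EuclideanSpace ℝ (Fin p) :=
    (WithLp.linearEquiv 2 ℝ (Fin p → ℝ)).symm
  let S : Submodule ℝ (EuclideanSpace ℝ (Fin p)) :=
    (LinearMap.range B.mulVecLin).map (φ : (Fin p → ℝ) →ₗ[ℝ] EuclideanSpace ℝ (Fin p))
  have hfr : Module.finrank ℝ S ≤ k := by
    exact le_trans (LinearEquiv.finrank_map_eq φ _).le hk
  let b := stdOrthonormalBasis ℝ S
  refine ⟨Module.finrank ℝ S, hfr, fun j => ((b j : EuclideanSpace ℝ (Fin p)) : Fin p → ℝ),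
    ?_, ?_⟩
  · intro i j
    have hON := b.orthonormal
    rw [orthonormal_iff_ite] at hON
    have h := hON i j
    rw [Submodule.coe_inner, PiLp.inner_apply] at h
    simp only [RCLike.inner_apply, conj_trivial] at h
    rw [← h]
    simp only [dotProduct]; exact Finset.sum_congr rfl fun x _ => mul_comm _ _
  · intro x
    have hmem : φ (B.mulVec x) ∈ S := Submodule.mem_map_of_mem ⟨x, rfl⟩
    refine ⟨fun j => b.repr ⟨φ (B.mulVec x), hmem⟩ j, ?_⟩
    have hs := b.sum_repr ⟨φ (B.mulVec x), hmem⟩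
    have hco := congrArg (Subtype.val) hs
    rw [Submodule.coe_sum] at hco
    simp only [SetLike.val_smul] at hco
    exact (congrArg WithLp.ofLp hco.symm).trans (by simp [WithLp.ofLp_sum, WithLp.ofLp_smul])

private lemma ey_rearrange {m k : ℕ} (σ : Fin m → ℝ) (hσ0 : ∀ i, 0 ≤ σ i)
    (hσmono : Antitone σ)
    (t : Fin m → ℝ) (ht0 : ∀ i, 0 ≤ t i) (ht1 : ∀ i, t i ≤ 1)
    (htsum : ∑ i, t i ≤ (k : ℝ)) :
    ∑ i ∈ Finset.univ.filter (fun i : Fin m => k ≤ (i : ℕ)), σ i ^ 2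
      ≤ ∑ i, σ i ^ 2 * (1 - t i) := by
  classical
  by_cases hkm : k < m
  · set c : ℝ := σ ⟨k, hkm⟩ ^ 2 with hc
    have hc0 : 0 ≤ c := sq_nonneg _
    have hsplit : (Finset.univ : Finset (Fin m)) =
        Finset.univ.filter (fun i : Fin m => k ≤ (i : ℕ)) ∪
        Finset.univ.filter (fun i : Fin m => (i : ℕ) < k) := by
      ext i; simpa using le_or_gt k (i : ℕ)
    have hdisj : Disjoint (Finset.univ.filter (fun i : Fin m => k ≤ (i : ℕ)))
        (Finset.univ.filter (fun i : Fin m => (i : ℕ) < k)) := by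
      simp only [Finset.disjoint_filter, Finset.mem_univ, true_implies]
      omega
    rw [show ∑ i, σ i ^ 2 * (1 - t i)
        = ∑ i ∈ Finset.univ.filter (fun i : Fin m => k ≤ (i : ℕ)), σ i ^ 2 * (1 - t i)
          + ∑ i ∈ Finset.univ.filter (fun i : Fin m => (i : ℕ) < k), σ i ^ 2 * (1 - t i)
        from by rw [← Finset.sum_union hdisj, ← hsplit]]
    have hA : ∑ i ∈ Finset.univ.filter (fun i : Fin m => k ≤ (i : ℕ)), σ i ^ 2
        - ∑ i ∈ Finset.univ.filter (fun i : Fin m => k ≤ (i : ℕ)), σ i ^ 2 * (1 - t i)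
        = ∑ i ∈ Finset.univ.filter (fun i : Fin m => k ≤ (i : ℕ)), σ i ^ 2 * t i := by
      rw [← Finset.sum_sub_distrib]; exact Finset.sum_congr rfl fun i _ => by ring
    have h1 : ∑ i ∈ Finset.univ.filter (fun i : Fin m => k ≤ (i : ℕ)), σ i ^ 2 * t i
        ≤ c * ∑ i ∈ Finset.univ.filter (fun i : Fin m => k ≤ (i : ℕ)), t i := by
      rw [Finset.mul_sum]
      apply Finset.sum_le_sum
      intro i hi
      simp only [Finset.mem_filter] at hi
      have : σ i ≤ σ ⟨k, hkm⟩ := hσmono (by exact hi.2)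
      have := mul_le_mul_of_nonneg_right
        (pow_le_pow_left₀ (hσ0 i) this 2) (ht0 i)
      simpa [hc] using this
    have h2 : c * ∑ i ∈ Finset.univ.filter (fun i : Fin m => (i : ℕ) < k), (1 - t i)
        ≤ ∑ i ∈ Finset.univ.filter (fun i : Fin m => (i : ℕ) < k), σ i ^ 2 * (1 - t i) := by
      rw [Finset.mul_sum]
      apply Finset.sum_le_sum
      intro i hi
      simp only [Finset.mem_filter] at hi
      have hle : σ ⟨k, hkm⟩ ≤ σ i := hσmono (le_of_lt hi.2)
      have : c ≤ σ i ^ 2 := by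
        rw [hc]; exact pow_le_pow_left₀ (hσ0 _) hle 2
      exact mul_le_mul_of_nonneg_right this (by linarith [ht1 i])
    have hcard : (Finset.univ.filter (fun i : Fin m => (i : ℕ) < k)).card = k := by
      have heq : Finset.univ.filter (fun i : Fin m => (i : ℕ) < k)
          = Finset.Iio (⟨k, hkm⟩ : Fin m) := by
        ext i; simp [Finset.mem_Iio, Fin.lt_def]
      rw [heq, Fin.card_Iio]
    have h3 : ∑ i ∈ Finset.univ.filter (fun i : Fin m => (i : ℕ) < k), (1 - t i)
        = (k : ℝ) - ∑ i ∈ Finset.univ.filter (fun i : Fin m => (i : ℕ) < k), t i := by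
      rw [Finset.sum_sub_distrib, Finset.sum_const, hcard]; simp
    have h4 : (∑ i ∈ Finset.univ.filter (fun i : Fin m => k ≤ (i : ℕ)), t i)
        + (∑ i ∈ Finset.univ.filter (fun i : Fin m => (i : ℕ) < k), t i) = ∑ i, t i := by
      rw [← Finset.sum_union hdisj, ← hsplit]
    nlinarith [h1, h2, h3, h4, htsum, hc0]
  · have hempty : Finset.univ.filter (fun i : Fin m => k ≤ (i : ℕ)) = ∅ := by
      ext i; simp; omega
    rw [hempty]
    simp only [Finset.sum_empty]
    apply Finset.sum_nonneg
    intro i _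
    have := ht1 i
    nlinarith [sq_nonneg (σ i)]

end EckartYoungAux

/-- Eckart–Young: if `A = ∑ i, σ i • u i (v i)ᵀ` is an SVD with orthonormal
families `u`, `v` and decreasing nonnegative singular values `σ`, then for any
matrix `B` of rank at most `k`,
`‖A − B‖_F² ≥ ∑_{i ≥ k} σ i ²`. -/
theorem stmt_19 (p q k : ℕ) (A : Matrix (Fin p) (Fin q) ℝ)
    (σ : Fin (min p q) → ℝ) (u : Fin (min p q) → Fin p → ℝ)
    (v : Fin (min p q) → Fin q → ℝ)
    (hσ0 : ∀ i, 0 ≤ σ i) (hσmono : Antitone σ)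
    (hu : ∀ i j, u i ⬝ᵥ u j = if i = j then 1 else 0)
    (hv : ∀ i j, v i ⬝ᵥ v j = if i = j then 1 else 0)
    (hA : A = ∑ i, σ i • vecMulVec (u i) (v i)) :
    ∀ B : Matrix (Fin p) (Fin q) ℝ, B.rank ≤ k →
      ∑ i ∈ Finset.univ.filter (fun i : Fin (min p q) => k ≤ (i : ℕ)), σ i ^ 2
        ≤ ∑ i, ∑ j, (A i j - B i j) ^ 2 := by
  intro B hB
  classical
  set M : Matrix (Fin p) (Fin q) ℝ := A - B with hM
  -- A applied to v i
  have hAv : ∀ i, A.mulVec (v i) = σ i • u i := by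
    intro i
    rw [hA]
    funext a
    simp only [mulVec, dotProduct, Finset.sum_apply, Matrix.sum_apply, Matrix.smul_apply,
      vecMulVec_apply, smul_eq_mul, Finset.sum_mul, Pi.smul_apply]
    rw [Finset.sum_comm]
    have : ∀ j, ∑ b, σ j * (u j a * v j b) * v i b = σ j * u j a * (v j ⬝ᵥ v i) := by
      intro j; rw [dotProduct, Finset.mul_sum]; exact Finset.sum_congr rfl fun b _ => by ring
    simp only [this, hv]
    simp [Finset.sum_ite_eq', mul_comm]
  -- orthonormal basis of range of B
  obtain ⟨r, hrk, e, he, hrange⟩ := ey_exists_onb B hB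
  choose c hc using fun i => hrange (v i)
  set t : Fin (min p q) → ℝ := fun i => ∑ j, (u i ⬝ᵥ e j) ^ 2 with ht
  have hui : ∀ i, u i ⬝ᵥ u i = 1 := by intro i; simpa using hu i i
  have ht0 : ∀ i, 0 ≤ t i := fun i => Finset.sum_nonneg fun j _ => sq_nonneg _
  have ht1 : ∀ i, t i ≤ 1 := by
    intro i
    have := ey_bessel e he (u i)
    rwa [hui i] at this
  have htsum : ∑ i, t i ≤ (k : ℝ) := by
    have h1 : ∑ i, t i = ∑ j, ∑ i, (u i ⬝ᵥ e j) ^ 2 := by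
      rw [ht]; exact Finset.sum_comm
    have h2 : ∀ j, ∑ i, (u i ⬝ᵥ e j) ^ 2 ≤ 1 := by
      intro j
      have hb := ey_bessel u hu (e j)
      have hee : e j ⬝ᵥ e j = 1 := by simpa using he j j
      rw [hee] at hb
      calc ∑ i, (u i ⬝ᵥ e j) ^ 2 = ∑ i, (e j ⬝ᵥ u i) ^ 2 := by
            exact Finset.sum_congr rfl fun i _ => by rw [dotProduct_comm]
        _ ≤ 1 := hb
    calc ∑ i, t i = ∑ j, ∑ i, (u i ⬝ᵥ e j) ^ 2 := h1
      _ ≤ ∑ _j : Fin r, (1 : ℝ) := Finset.sum_le_sum fun j _ => h2 j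
      _ = (r : ℝ) := by simp
      _ ≤ (k : ℝ) := by exact_mod_cast hrk
  -- per-index lower bound
  have hper : ∀ i, σ i ^ 2 * (1 - t i)
      ≤ (M.mulVec (v i)) ⬝ᵥ (M.mulVec (v i)) := by
    intro i
    have hMv : M.mulVec (v i) = σ i • u i - ∑ j, c i j • e j := by
      rw [hM, Matrix.sub_mulVec, hAv i, hc i]
    rw [hMv]
    exact ey_key_expand e he (σ i) (u i) (hui i) (c i)
  -- sum over i, then bound by Frobenius norm
  have hfrob : ∑ i, (M.mulVec (v i)) ⬝ᵥ (M.mulVec (v i)) ≤ ∑ a, ∑ b, (M a b) ^ 2 := by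
    have hrow : ∀ i, (M.mulVec (v i)) ⬝ᵥ (M.mulVec (v i)) = ∑ a, (M a ⬝ᵥ v i) ^ 2 := by
      intro i
      simp only [dotProduct, mulVec, sq]
    rw [show ∑ i, (M.mulVec (v i)) ⬝ᵥ (M.mulVec (v i))
        = ∑ a, ∑ i, (M a ⬝ᵥ v i) ^ 2 from by
      simp only [hrow]; exact Finset.sum_comm]
    apply Finset.sum_le_sum
    intro a _
    have := ey_bessel v hv (M a)
    calc ∑ i, (M a ⬝ᵥ v i) ^ 2 ≤ M a ⬝ᵥ M a := this
      _ = ∑ b, (M a b) ^ 2 := by simp [dotProduct, sq]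
  have hmain := ey_rearrange σ hσ0 hσmono t ht0 ht1 htsum
  have hsum : ∑ i, σ i ^ 2 * (1 - t i) ≤ ∑ i, (M.mulVec (v i)) ⬝ᵥ (M.mulVec (v i)) :=
    Finset.sum_le_sum fun i _ => hper i
  have hMab : ∀ a b, M a b = A a b - B a b := fun a b => rfl
  calc ∑ i ∈ Finset.univ.filter (fun i : Fin (min p q) => k ≤ (i : ℕ)), σ i ^ 2
      ≤ ∑ i, σ i ^ 2 * (1 - t i) := hmain
    _ ≤ ∑ i, (M.mulVec (v i)) ⬝ᵥ (M.mulVec (v i)) := hsum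
    _ ≤ ∑ a, ∑ b, (M a b) ^ 2 := hfrob
    _ = ∑ a, ∑ b, (A a b - B a b) ^ 2 := by simp [hMab]
end
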